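/- For all real numbers a > 0, b > 0 and p > 0, ∫_0^∞ (1 - e^{-ax})(1 - e^{-bx}) e^{-px}/(1 - e^{-x}) dx = ψ(p+a) + ψ(p+b) - ψ(p+a+b) - ψ(p). -/

import Mathlib

/-!
Expanding `1 / (1 - e^{-x})` as a geometric series and integrating term by term (all terms are
nonnegative) turns the integral into
`∑ₙ ((p+n)⁻¹ - (p+a+n)⁻¹) - ((p+b+n)⁻¹ - (p+a+b+n)⁻¹)`.
By `ψ(x+1) = ψ(x) + 1/x`, the partial sums of `∑ₙ ((p+n)⁻¹ - (q+n)⁻¹)` equal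
`ψ q - ψ p - (ψ(q+n) - ψ(p+n))`, and the remainder tends to `0` because `ψ = (log Γ)'` is
increasing by the convexity of `log Γ` (Bohr–Mollerup), so that
`0 ≤ ψ(q+n) - ψ(p+n) ≤ ψ(p+n+⌈q-p⌉) - ψ(p+n) ≤ ⌈q-p⌉ / (p+n)`.
-/

open MeasureTheory Real

/-- The digamma function `ψ(x) = Γ'(x)/Γ(x)`. -/
noncomputable def digamma (x : ℝ) : ℝ := deriv Real.Gamma x / Real.Gamma x

open Set Filter Topology

lemma differentiableAt_Gamma_of_pos {x : ℝ} (hx : 0 < x) : DifferentiableAt ℝ Gamma x :=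
  differentiableAt_Gamma fun m ↦ by linarith [(Nat.cast_nonneg m : (0 : ℝ) ≤ m)]

lemma differentiableAt_log_Gamma {x : ℝ} (hx : 0 < x) : DifferentiableAt ℝ (log ∘ Gamma) x :=
  (differentiableAt_Gamma_of_pos hx).log (Gamma_pos_of_pos hx).ne'

lemma digamma_eq_deriv_log_Gamma {x : ℝ} (hx : 0 < x) : digamma x = deriv (log ∘ Gamma) x := by
  rw [digamma, Function.comp_def,
    deriv.log (differentiableAt_Gamma_of_pos hx) (Gamma_pos_of_pos hx).ne']

lemma digamma_add_one {x : ℝ} (hx : 0 < x) : digamma (x + 1) = digamma x + x⁻¹ := by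
  rw [digamma_eq_deriv_log_Gamma (by positivity), digamma_eq_deriv_log_Gamma hx,
    ← deriv_comp_add_const, ← deriv_log,
    ← deriv_add (differentiableAt_log_Gamma hx) (differentiableAt_log hx.ne')]
  refine EventuallyEq.deriv_eq ?_
  filter_upwards [eventually_gt_nhds hx] with y hy
  simp only [Pi.add_apply, Function.comp_apply, Gamma_add_one hy.ne',
    log_mul hy.ne' (Gamma_pos_of_pos hy).ne', add_comm]

lemma digamma_add_nat {x : ℝ} (hx : 0 < x) (n : ℕ) :
    digamma (x + n) = digamma x + ∑ k ∈ Finset.range n, (x + k)⁻¹ := by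
  induction n with
  | zero => simp
  | succ n ih =>
    rw [Nat.cast_succ, ← add_assoc, digamma_add_one (by positivity), ih, Finset.sum_range_succ,
      add_assoc]

lemma monotoneOn_digamma : MonotoneOn digamma (Ioi 0) := by
  intro x hx y hy hxy
  rw [digamma_eq_deriv_log_Gamma hx, digamma_eq_deriv_log_Gamma hy]
  exact convexOn_log_Gamma.monotoneOn_deriv (fun z hz ↦ differentiableAt_log_Gamma hz) hx hy hxy

lemma tendsto_digamma_add_nat_sub_digamma_add_nat {p q : ℝ} (hp : 0 < p) (hpq : p ≤ q) :
    Tendsto (fun n : ℕ ↦ digamma (q + n) - digamma (p + n)) atTop (𝓝 0) := by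
  set m := ⌈q - p⌉₊
  have hbound (n : ℕ) : digamma (q + n) - digamma (p + n) ≤ m * (p + n)⁻¹ := by
    have hpn : 0 < p + n := by positivity
    have hq_le : q + n ≤ p + n + m := by linarith [Nat.le_ceil (q - p)]
    calc digamma (q + n) - digamma (p + n)
        ≤ digamma (p + n + m) - digamma (p + n) := by
          gcongr
          exact monotoneOn_digamma (mem_Ioi.2 (by linarith)) (mem_Ioi.2 (by positivity)) hq_le
      _ = ∑ k ∈ Finset.range m, (p + n + k)⁻¹ := by rw [digamma_add_nat hpn]; ring
      _ ≤ ∑ k ∈ Finset.range m, (p + n)⁻¹ :=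
          Finset.sum_le_sum fun k _ ↦ inv_anti₀ hpn (le_add_of_nonneg_right k.cast_nonneg)
      _ = m * (p + n)⁻¹ := by simp
  have hnonneg (n : ℕ) : 0 ≤ digamma (q + n) - digamma (p + n) :=
    sub_nonneg.2 <| monotoneOn_digamma (mem_Ioi.2 (by positivity))
      (mem_Ioi.2 (by linarith [(Nat.cast_nonneg n : (0 : ℝ) ≤ n)])) (by linarith)
  have hlim : Tendsto (fun n : ℕ ↦ (m : ℝ) * (p + n)⁻¹) atTop (𝓝 0) := by
    simpa using (tendsto_inv_atTop_zero.comp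
      (tendsto_atTop_add_const_left atTop p tendsto_natCast_atTop_atTop)).const_mul (m : ℝ)
  exact tendsto_of_tendsto_of_tendsto_of_le_of_le tendsto_const_nhds hlim hnonneg hbound

lemma hasSum_digamma_sub_digamma {p q : ℝ} (hp : 0 < p) (hpq : p ≤ q) :
    HasSum (fun n : ℕ ↦ (p + n)⁻¹ - (q + n)⁻¹) (digamma q - digamma p) := by
  have hq : 0 < q := hp.trans_le hpq
  rw [hasSum_iff_tendsto_nat_of_nonneg fun n ↦ sub_nonneg.2 <| by gcongr]
  have hpartial (n : ℕ) : ∑ k ∈ Finset.range n, ((p + k)⁻¹ - (q + k)⁻¹) =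
      (digamma q - digamma p) - (digamma (q + n) - digamma (p + n)) := by
    rw [Finset.sum_sub_distrib, digamma_add_nat hp, digamma_add_nat hq]; ring
  simpa [hpartial] using (tendsto_digamma_add_nat_sub_digamma_add_nat hp hpq).const_sub
    (digamma q - digamma p)

lemma hasSum_digamma_mixed_difference {a b p : ℝ} (ha : 0 ≤ a) (hb : 0 ≤ b) (hp : 0 < p) :
    HasSum
      (fun n : ℕ ↦ (p + n)⁻¹ - (p + n + a)⁻¹ - (p + n + b)⁻¹ + (p + n + a + b)⁻¹)
      (digamma (p + a) + digamma (p + b) - digamma (p + a + b) - digamma p) := by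
  rw [show digamma (p + a) + digamma (p + b) - digamma (p + a + b) - digamma p =
      (digamma (p + a) - digamma p) - (digamma (p + a + b) - digamma (p + b)) by ring]
  refine ((hasSum_digamma_sub_digamma hp (le_add_of_nonneg_right ha)).sub
    (hasSum_digamma_sub_digamma (p := p + b) (q := p + a + b) (by positivity) (by linarith))
    ).congr_fun fun n ↦ ?_
  rw [add_right_comm p _ a, add_right_comm p _ b, add_right_comm (p + a) _ b]
  ring

lemma integrableOn_exp_neg_mul_Ioi {c : ℝ} (hc : 0 < c) :
    IntegrableOn (fun t ↦ exp (-(c * t))) (Ioi 0) := by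
  simpa only [neg_mul] using exp_neg_integrableOn_Ioi 0 hc

lemma integral_exp_neg_mul_Ioi {c : ℝ} (hc : 0 < c) :
    ∫ t in Ioi 0, exp (-(c * t)) = c⁻¹ := by
  simpa [neg_mul, div_neg, ← neg_div] using integral_exp_mul_Ioi (neg_lt_zero.2 hc) 0

lemma hasSum_mul_exp_neg_nat_mul {t : ℝ} (ht : 0 < t) (y : ℝ) :
    HasSum (fun n : ℕ ↦ y * exp (-(n * t))) (y / (1 - exp (-t))) := by
  have hgeom := (hasSum_geometric_of_lt_one (exp_pos (-t)).le
    (exp_lt_one_iff.2 (neg_lt_zero.2 ht))).mul_left y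
  simpa only [← exp_nat_mul, mul_neg, div_eq_mul_inv] using hgeom

lemma integral_div_one_sub_exp_neg_Ioi {φ : ℝ → ℝ} {s : ℝ}
    (hφ : ∀ t ∈ Ioi 0, 0 ≤ φ t)
    (hint : ∀ n : ℕ, IntegrableOn (fun t ↦ φ t * exp (-(n * t))) (Ioi 0))
    (hs : HasSum (fun n : ℕ ↦ ∫ t in Ioi 0, φ t * exp (-(n * t))) s) :
    ∫ t in Ioi 0, φ t / (1 - exp (-t)) = s := by
  have hnorm (n : ℕ) :
      ∫ t in Ioi 0, ‖φ t * exp (-(n * t))‖ = ∫ t in Ioi 0, φ t * exp (-(n * t)) :=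
    setIntegral_congr_fun measurableSet_Ioi fun t ht ↦
      norm_of_nonneg (mul_nonneg (hφ t ht) (exp_pos _).le)
  have hsum := hasSum_integral_of_summable_integral_norm hint
    (by simpa only [hnorm] using hs.summable)
  rw [← hsum.unique hs]
  exact setIntegral_congr_fun measurableSet_Ioi fun t ht ↦
    ((hasSum_mul_exp_neg_nat_mul ht (φ t)).tsum_eq).symm

lemma one_sub_exp_mul_one_sub_exp_mul_exp (a b c t : ℝ) :
    (1 - exp (-(a * t))) * (1 - exp (-(b * t))) * exp (-(c * t)) =
      exp (-(c * t)) - exp (-((c + a) * t)) - exp (-((c + b) * t)) +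
        exp (-((c + a + b) * t)) := by
  simp only [add_mul, neg_add, exp_add]; ring

lemma one_sub_exp_mul_one_sub_exp_mul_exp_nonneg {a b t : ℝ} (ha : 0 ≤ a) (hb : 0 ≤ b)
    (ht : 0 ≤ t) (c : ℝ) :
    0 ≤ (1 - exp (-(a * t))) * (1 - exp (-(b * t))) * exp (-(c * t)) := by
  have hexp_le {d : ℝ} (hd : 0 ≤ d) : exp (-(d * t)) ≤ 1 :=
    exp_le_one_iff.2 (neg_nonpos.2 (mul_nonneg hd ht))
  exact mul_nonneg (mul_nonneg (sub_nonneg.2 (hexp_le ha)) (sub_nonneg.2 (hexp_le hb)))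
    (exp_pos _).le

lemma integrableOn_one_sub_exp_mul_one_sub_exp_mul_exp_Ioi {a b c : ℝ} (ha : 0 ≤ a)
    (hb : 0 ≤ b) (hc : 0 < c) :
    IntegrableOn (fun t ↦ (1 - exp (-(a * t))) * (1 - exp (-(b * t))) * exp (-(c * t)))
      (Ioi 0) := by
  have hint {d : ℝ} (hd : 0 < d) := integrableOn_exp_neg_mul_Ioi hd
  simp only [one_sub_exp_mul_one_sub_exp_mul_exp]
  exact (((hint hc).sub (hint (by positivity))).sub (hint (by positivity))).add
    (hint (by positivity))

lemma integral_one_sub_exp_mul_one_sub_exp_mul_exp_Ioi {a b c : ℝ} (ha : 0 ≤ a)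
    (hb : 0 ≤ b) (hc : 0 < c) :
    ∫ t in Ioi 0, (1 - exp (-(a * t))) * (1 - exp (-(b * t))) * exp (-(c * t)) =
      c⁻¹ - (c + a)⁻¹ - (c + b)⁻¹ + (c + a + b)⁻¹ := by
  have hca : 0 < c + a := by positivity
  have hcb : 0 < c + b := by positivity
  have hcab : 0 < c + a + b := by positivity
  have hint {d : ℝ} (hd : 0 < d) := integrableOn_exp_neg_mul_Ioi hd
  simp only [one_sub_exp_mul_one_sub_exp_mul_exp]
  rw [integral_add, integral_sub, integral_sub, integral_exp_neg_mul_Ioi hc,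
    integral_exp_neg_mul_Ioi hca, integral_exp_neg_mul_Ioi hcb, integral_exp_neg_mul_Ioi hcab]
  exacts [hint hc, hint hca, (hint hc).sub (hint hca), hint hcb,
    ((hint hc).sub (hint hca)).sub (hint hcb), hint hcab]

theorem integral_one_sub_exp_mul_one_sub_exp_mul_exp_div (a b p : ℝ)
    (ha : 0 < a) (hb : 0 < b) (hp : 0 < p) :
    ∫ x in Set.Ioi (0 : ℝ),
        (1 - Real.exp (-(a * x))) * (1 - Real.exp (-(b * x))) * Real.exp (-(p * x))
          / (1 - Real.exp (-x))
      = digamma (p + a) + digamma (p + b) - digamma (p + a + b) - digamma p := by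
  have hshift (n : ℕ) (t : ℝ) :
      (1 - exp (-(a * t))) * (1 - exp (-(b * t))) * exp (-(p * t)) * exp (-(n * t)) =
        (1 - exp (-(a * t))) * (1 - exp (-(b * t))) * exp (-((p + n) * t)) := by
    rw [mul_assoc, ← exp_add, ← neg_add, ← add_mul]
  refine integral_div_one_sub_exp_neg_Ioi
    (fun t ht ↦ one_sub_exp_mul_one_sub_exp_mul_exp_nonneg ha.le hb.le (le_of_lt ht) p)
    (fun n ↦ ?_) ?_
  · simpa only [hshift] using
      integrableOn_one_sub_exp_mul_one_sub_exp_mul_exp_Ioi ha.le hb.le (by positivity)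
  · have hmoment (n : ℕ) := integral_one_sub_exp_mul_one_sub_exp_mul_exp_Ioi ha.le hb.le
      (by positivity : 0 < p + n)
    simpa only [hshift, hmoment] using hasSum_digamma_mixed_difference ha.le hb.le hp
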